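/- arXiv:1109.4765 — 4 statements merged into one kernel-verified Lean document; each statement's English description precedes it below -/
import Mathlib

section
/- Let B be a commutative unitary ring, let b₁, b₂ ∈ B, and let y ≥ 1 be an integer. Then ∑_{t=0}^{y} (−1)^{t+1} · C(y,t) · (b₁+b₂)^{y−t} · (∑_{i=0}^{t} b₁^i · b₂^{t−i}) = ∑_{j=1}^{y−1} b₁^{y−j} · b₂^{j}, where C(y,t) denotes the binomial coefficient. -/
open Finset

lemma lhs_mul_aux (B : Type*) [CommRing B] (b₁ b₂ : B) (y : ℕ) :
    (∑ t ∈ range (y + 1),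
      (-1 : B) ^ (t + 1) * (Nat.choose y t : B) * (b₁ + b₂) ^ (y - t) *
        (∑ i ∈ range (t + 1), b₁ ^ i * b₂ ^ (t - i))) * (b₁ - b₂) =
    b₂ * b₁ ^ y - b₁ * b₂ ^ y := by
  rw [Finset.sum_mul]
  have key : ∀ t ∈ range (y + 1),
      ((-1 : B) ^ (t + 1) * (Nat.choose y t : B) * (b₁ + b₂) ^ (y - t) *
        (∑ i ∈ range (t + 1), b₁ ^ i * b₂ ^ (t - i))) * (b₁ - b₂)
      = b₂ * ((-b₂) ^ t * (b₁ + b₂) ^ (y - t) * (Nat.choose y t : B))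
        - b₁ * ((-b₁) ^ t * (b₁ + b₂) ^ (y - t) * (Nat.choose y t : B)) := by
    intro t _
    have h := geom_sum₂_mul b₁ b₂ (t + 1)
    simp only [Nat.add_sub_cancel] at h
    rw [mul_assoc, h]
    rw [neg_pow, neg_pow]
    ring
  rw [Finset.sum_congr rfl key, Finset.sum_sub_distrib, ← Finset.mul_sum, ← Finset.mul_sum,
    ← add_pow, ← add_pow]
  ring_nf

lemma rhs_mul_aux (B : Type*) [CommRing B] (b₁ b₂ : B) (y : ℕ) (hy : 1 ≤ y) :
    (∑ j ∈ Finset.Icc 1 (y - 1), b₁ ^ (y - j) * b₂ ^ j) * (b₁ - b₂) =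
    b₂ * b₁ ^ y - b₁ * b₂ ^ y := by
  have h1 : Finset.Icc 1 (y - 1) = Finset.range (y + 1) \ {0, y} := by
    ext j
    simp only [Finset.mem_Icc, Finset.mem_sdiff, Finset.mem_range, Finset.mem_insert,
      Finset.mem_singleton]
    omega
  have h2 : ({0, y} : Finset ℕ) ⊆ Finset.range (y + 1) := by
    intro j; simp only [Finset.mem_insert, Finset.mem_singleton, Finset.mem_range]; omega
  rw [h1, Finset.sum_sdiff_eq_sub h2, Finset.sum_pair (by omega : (0:ℕ) ≠ y)]
  have h3 : (∑ j ∈ Finset.range (y + 1), b₁ ^ (y - j) * b₂ ^ j) * (b₂ - b₁)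
      = b₂ ^ (y+1) - b₁ ^ (y+1) := by
    have := geom_sum₂_mul b₂ b₁ (y + 1)
    simp only [Nat.add_sub_cancel] at this
    rw [← this]
    congr 1
    exact Finset.sum_congr rfl fun j _ => mul_comm _ _
  have h4 : (∑ j ∈ Finset.range (y + 1), b₁ ^ (y - j) * b₂ ^ j) * (b₁ - b₂)
      = b₁ ^ (y+1) - b₂ ^ (y+1) := by
    have : b₁ - b₂ = -(b₂ - b₁) := by ring
    rw [this, mul_neg, h3]; ring
  rw [sub_mul, h4]
  simp only [Nat.sub_zero, pow_zero, Nat.sub_self]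
  have hx : b₁ ^ (y + 1) = b₁ * b₁ ^ y := by ring
  have hx2 : b₂ ^ (y + 1) = b₂ * b₂ ^ y := by ring
  rw [hx, hx2]
  ring

lemma poly_identity (y : ℕ) (hy : 1 ≤ y) :
    ∑ t ∈ Finset.range (y + 1),
      (-1 : MvPolynomial (Fin 2) ℤ) ^ (t + 1) * (Nat.choose y t : MvPolynomial (Fin 2) ℤ) *
        (MvPolynomial.X 0 + MvPolynomial.X 1) ^ (y - t) *
        (∑ i ∈ Finset.range (t + 1), MvPolynomial.X 0 ^ i * MvPolynomial.X 1 ^ (t - i)) =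
    ∑ j ∈ Finset.Icc 1 (y - 1),
      (MvPolynomial.X 0 : MvPolynomial (Fin 2) ℤ) ^ (y - j) * MvPolynomial.X 1 ^ j := by
  have hne : (MvPolynomial.X 0 - MvPolynomial.X 1 : MvPolynomial (Fin 2) ℤ) ≠ 0 := by
    rw [sub_ne_zero]
    intro h
    exact absurd (MvPolynomial.X_injective h) (by decide)
  exact mul_right_cancel₀ hne
    ((lhs_mul_aux _ _ _ y).trans (rhs_mul_aux _ _ _ y hy).symm)

theorem sum_identity_comm_ring (B : Type*) [CommRing B] (b₁ b₂ : B) (y : ℕ) (hy : 1 ≤ y) :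
    ∑ t ∈ Finset.range (y + 1),
      (-1 : B) ^ (t + 1) * (Nat.choose y t : B) * (b₁ + b₂) ^ (y - t) *
        (∑ i ∈ Finset.range (t + 1), b₁ ^ i * b₂ ^ (t - i)) =
    ∑ j ∈ Finset.Icc 1 (y - 1), b₁ ^ (y - j) * b₂ ^ j := by
  have h := congrArg (MvPolynomial.aeval ![b₁, b₂]) (poly_identity y hy)
  simpa [map_sum, map_mul, map_pow, map_natCast, Matrix.cons_val_zero, Matrix.cons_val_one,
    Matrix.head_cons] using h
end

section
/- In the polynomial ring ℤ[T₁,T₂] in two indeterminates over the integers, for every integer y ≥ 1 one has the identity ∑_{t=0}^{y} (−1)^{t+1} · C(y,t) · (T₁+T₂)^{y−t} · (∑_{i=0}^{t} T₁^i · T₂^{t−i}) = ∑_{j=1}^{y−1} T₁^{y−j} · T₂^{j}, where C(y,t) is the binomial coefficient. -/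
/-!
Multiply both sides by `T₁ - T₂`, a non-zero-divisor. On the left each inner sum becomes
`T₁^(t+1) - T₂^(t+1)`, so the left side splits into the binomial expansions of
`(-T₁ + (T₁ + T₂))^y` and `(-T₂ + (T₁ + T₂))^y`, i.e. it equals `T₂ T₁^y - T₁ T₂^y`;
the right side telescopes to the same value.
-/

open MvPolynomial Finset

section CommRing

variable {R : Type*} [CommRing R] (a b : R)

theorem sub_mul_sum_range_pow_mul_pow_sub (t : ℕ) :
    (a - b) * ∑ i ∈ range (t + 1), a ^ i * b ^ (t - i) = a ^ (t + 1) - b ^ (t + 1) := by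
  simpa using (Commute.all a b).mul_geom_sum₂ (t + 1)

theorem sub_mul_sum_Icc_pow_mul_pow (n : ℕ) :
    (a - b) * ∑ j ∈ Icc 1 n, a ^ (n + 1 - j) * b ^ j = b * a ^ (n + 1) - a * b ^ (n + 1) := by
  have h := sub_mul_sum_range_pow_mul_pow_sub b a (n + 1)
  rw [sum_range_succ, sum_range_eq_add_Ico _ (by positivity), Ico_add_one_right_eq_Icc] at h
  simp only [mul_comm (b ^ _), pow_zero, Nat.sub_zero, Nat.sub_self, one_mul] at h
  linear_combination (-1 : R) * h

theorem sub_mul_sum_range_choose_mul_sum_pow_mul_pow (y : ℕ) :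
    (a - b) * ∑ t ∈ range (y + 1), (-1) ^ (t + 1) * (y.choose t : R) * (a + b) ^ (y - t) *
      ∑ i ∈ range (t + 1), a ^ i * b ^ (t - i) = b * a ^ y - a * b ^ y := by
  have term (t : ℕ) : (a - b) * ((-1) ^ (t + 1) * (y.choose t : R) * (a + b) ^ (y - t) *
      ∑ i ∈ range (t + 1), a ^ i * b ^ (t - i)) =
      b * ((-b) ^ t * (a + b) ^ (y - t) * y.choose t)
        - a * ((-a) ^ t * (a + b) ^ (y - t) * y.choose t) := by
    linear_combination (-1) ^ (t + 1) * (y.choose t : R) * (a + b) ^ (y - t) *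
      sub_mul_sum_range_pow_mul_pow_sub a b t
  rw [mul_sum, sum_congr rfl fun t _ => term t, sum_sub_distrib, ← mul_sum, ← mul_sum, ← add_pow,
    ← add_pow]
  ring

end CommRing

theorem sum_identity_poly (y : ℕ) (hy : 1 ≤ y) :
    ∑ t ∈ Finset.range (y + 1),
      (-1 : MvPolynomial (Fin 2) ℤ) ^ (t + 1) * (Nat.choose y t : MvPolynomial (Fin 2) ℤ) *
        (X 0 + X 1) ^ (y - t) *
        (∑ i ∈ Finset.range (t + 1), (X 0 : MvPolynomial (Fin 2) ℤ) ^ i * X 1 ^ (t - i)) =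
    ∑ j ∈ Finset.Icc 1 (y - 1), (X 0 : MvPolynomial (Fin 2) ℤ) ^ (y - j) * X 1 ^ j := by
  obtain ⟨n, rfl⟩ := Nat.exists_eq_add_of_le' hy
  have hX : (X 0 - X 1 : MvPolynomial (Fin 2) ℤ) ≠ 0 :=
    sub_ne_zero.mpr (X_injective.ne (by decide))
  apply mul_left_cancel₀ hX
  rw [sub_mul_sum_range_choose_mul_sum_pow_mul_pow, Nat.add_sub_cancel, sub_mul_sum_Icc_pow_mul_pow]
end

section
/- For all integers d₁ ≥ d₂ ≥ 1 there exists a real number η with 0 < η < 1/d₁ such that (d₁³ + d₁²d₂ + d₁d₂² + d₂³)·η³ − 3(d₁² + d₁d₂ + d₂²)·η² + 3(d₁ + d₂)·η − 1 > 0. -/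
theorem ci_threefold_big (d₁ d₂ : ℤ) (h12 : d₂ ≤ d₁) (h2 : 1 ≤ d₂) :
    ∃ η : ℝ, 0 < η ∧ η < 1 / (d₁ : ℝ) ∧
      ((d₁ : ℝ) ^ 3 + (d₁ : ℝ) ^ 2 * d₂ + (d₁ : ℝ) * (d₂ : ℝ) ^ 2 + (d₂ : ℝ) ^ 3) * η ^ 3
        - 3 * ((d₁ : ℝ) ^ 2 + (d₁ : ℝ) * d₂ + (d₂ : ℝ) ^ 2) * η ^ 2
        + 3 * ((d₁ : ℝ) + (d₂ : ℝ)) * η - 1 > 0 := by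
  have hb : (1:ℝ) ≤ (d₂:ℝ) := by exact_mod_cast h2
  have hab : (d₂:ℝ) ≤ (d₁:ℝ) := by exact_mod_cast h12
  have ha : (0:ℝ) < (d₁:ℝ) := by linarith
  have hs : (0:ℝ) < (d₁:ℝ) + d₂ := by linarith
  refine ⟨1 / ((d₁:ℝ) + d₂), by positivity, ?_, ?_⟩
  · exact one_div_lt_one_div_of_lt ha (by linarith)
  · have key : ((d₁ : ℝ) ^ 3 + (d₁ : ℝ) ^ 2 * d₂ + (d₁ : ℝ) * (d₂ : ℝ) ^ 2 + (d₂ : ℝ) ^ 3)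
        * (1 / ((d₁:ℝ) + d₂)) ^ 3
        - 3 * ((d₁ : ℝ) ^ 2 + (d₁ : ℝ) * d₂ + (d₂ : ℝ) ^ 2) * (1 / ((d₁:ℝ) + d₂)) ^ 2
        + 3 * ((d₁ : ℝ) + (d₂ : ℝ)) * (1 / ((d₁:ℝ) + d₂)) - 1
        = (d₁:ℝ) * d₂ / ((d₁:ℝ) + d₂) ^ 2 := by
      field_simp
      ring
    rw [key]
    positivity
end

section
/- For every integer e ≥ 5 and every real number x with 0 < x < 1/2, one has −(e³ + 9e² + 22e + 16)x² + 2(e+1)(e²+5e+4)x − e(e+1)(e+2) < 0. -/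
theorem scroll_not_big_of_ge_five (e : ℤ) (he : 5 ≤ e) (x : ℝ) (hx0 : 0 < x)
    (hx2 : x < 1 / 2) :
    -((e : ℝ) ^ 3 + 9 * (e : ℝ) ^ 2 + 22 * (e : ℝ) + 16) * x ^ 2
      + 2 * ((e : ℝ) + 1) * ((e : ℝ) ^ 2 + 5 * (e : ℝ) + 4) * x
      - (e : ℝ) * ((e : ℝ) + 1) * ((e : ℝ) + 2) < 0 := by
  have hy : (5:ℝ) ≤ (e:ℝ) := by exact_mod_cast he
  set y : ℝ := (e:ℝ) with hydef
  -- A = y^3+9y^2+22y+16, B = (y+1)(y^2+5y+4)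
  have hA : (0:ℝ) < y^3 + 9*y^2 + 22*y + 16 := by nlinarith
  have h1 : (0:ℝ) < y^3 + 3*y^2 - 4*y - 8 := by nlinarith
  have h2 : (0:ℝ) < y^3 - 3*y^2 - 6*y := by nlinarith
  have hx1 : x + 1/2 < 1 := by linarith
  have hBA : (y^3 + 9*y^2 + 22*y + 16) * (x + 1/2) <
      2 * ((y+1) * (y^2 + 5*y + 4)) := by nlinarith
  have key : (0:ℝ) < (1/2 - x) *
      (2 * ((y+1) * (y^2 + 5*y + 4)) - (y^3 + 9*y^2 + 22*y + 16) * (x + 1/2)) := by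
    apply mul_pos <;> linarith
  nlinarith [key, h2]
end
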